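/- arXiv:1301.6224 — 2 statements merged into one kernel-verified Lean document; each statement's English description precedes it below -/
import Mathlib

section
/- For every integer d ≥ 2, the function ρ_d(x) = d·√(4(d-1) - x²) / (2π·(d² - x²)) on [-2√(d-1), 2√(d-1)] is a probability density, i.e., ∫_{-2√(d-1)}^{2√(d-1)} ρ_d(x) dx = 1. -/
/-!
With `a = 2√(d-1)` the density is `d/(2π) · √(a² - x²)/(d² - x²)`. For `0 < a ≤ D` and
`c = √(D² - a²)`, the function `arcsin (x/a) - (c/D) arcsin (c x / (a √(D² - x²)))` is a primitive
of `√(a² - x²)/(D² - x²)` on `(-a, a)`, so `∫_{-a}^{a} √(a² - x²)/(D² - x²) dx = π (D - c)/D`.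
Since `d² - 4(d - 1) = (d - 2)²`, here `c = d - 2` and the total mass is `(d - (d - 2))/2 = 1`.
-/

open Real Set

noncomputable def sqrtDivPrimitive (a D x : ℝ) : ℝ :=
  arcsin (x / a) - √(D ^ 2 - a ^ 2) / D * arcsin (√(D ^ 2 - a ^ 2) * x / (a * √(D ^ 2 - x ^ 2)))

theorem HasDerivAt.arcsin {f : ℝ → ℝ} {f' x : ℝ} (hf : HasDerivAt f f' x) (hx : f x ^ 2 < 1) :
    HasDerivAt (fun y => arcsin (f y)) (f' / √(1 - f x ^ 2)) x := by
  have h₁ : f x ≠ -1 := by rintro h; rw [h] at hx; norm_num at hx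
  have h₂ : f x ≠ 1 := by rintro h; rw [h] at hx; norm_num at hx
  exact ((hasDerivAt_arcsin h₁ h₂).comp x hf).congr_deriv (by ring)

section

variable {a D x : ℝ}

lemma one_sub_sq_sqrtDivPrimitive_arg (ha : 0 < a) (haD : a ≤ D) (hx : x ^ 2 < a ^ 2) :
    1 - (√(D ^ 2 - a ^ 2) * x / (a * √(D ^ 2 - x ^ 2))) ^ 2
      = (D * √(a ^ 2 - x ^ 2) / (a * √(D ^ 2 - x ^ 2))) ^ 2 := by
  have hs : 0 < D ^ 2 - x ^ 2 := by nlinarith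
  simp only [div_pow, mul_pow, sq_sqrt hs.le, sq_sqrt (by nlinarith : 0 ≤ D ^ 2 - a ^ 2),
    sq_sqrt (by nlinarith : 0 ≤ a ^ 2 - x ^ 2)]
  field_simp
  ring

lemma hasDerivAt_sqrtDivPrimitive_arg (ha : a ≠ 0) (hx : x ^ 2 < D ^ 2) :
    HasDerivAt (fun y => √(D ^ 2 - a ^ 2) * y / (a * √(D ^ 2 - y ^ 2)))
      (√(D ^ 2 - a ^ 2) * D ^ 2 / (a * √(D ^ 2 - x ^ 2) ^ 3)) x := by
  have hs : 0 < √(D ^ 2 - x ^ 2) := sqrt_pos.2 (by linarith)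
  have hsq : HasDerivAt (fun y => a * √(D ^ 2 - y ^ 2))
      (a * (-(2 * x) / (2 * √(D ^ 2 - x ^ 2)))) x :=
    (((hasDerivAt_pow 2 x).const_sub _).sqrt (by nlinarith)).const_mul a |>.congr_deriv (by simp)
  refine ((hasDerivAt_id' x).const_mul _ |>.div hsq (mul_ne_zero ha hs.ne')).congr_deriv ?_
  field_simp
  rw [sq_sqrt (by linarith)]
  ring

lemma hasDerivAt_sqrtDivPrimitive (ha : 0 < a) (haD : a ≤ D) (hx : x ∈ Ioo (-a) a) :
    HasDerivAt (sqrtDivPrimitive a D) (√(a ^ 2 - x ^ 2) / (D ^ 2 - x ^ 2)) x := by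
  have hxa : x ^ 2 < a ^ 2 := sq_lt_sq' hx.1 hx.2
  have hD : 0 < D := by linarith
  have hDx : 0 < D ^ 2 - x ^ 2 := by nlinarith
  have hr : 0 < √(a ^ 2 - x ^ 2) := sqrt_pos.2 (by linarith)
  have hs : 0 < √(D ^ 2 - x ^ 2) := sqrt_pos.2 hDx
  have harg := one_sub_sq_sqrtDivPrimitive_arg ha haD hxa
  have hlin : 1 - (x / a) ^ 2 = (√(a ^ 2 - x ^ 2) / a) ^ 2 := by
    rw [div_pow, div_pow, sq_sqrt (by linarith)]; field_simp
  have h₁ := ((hasDerivAt_id' x).div_const a).arcsin (by rw [← sub_pos, hlin]; positivity)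
  have h₂ := (hasDerivAt_sqrtDivPrimitive_arg ha.ne' (sub_pos.1 hDx)).arcsin
    (by rw [← sub_pos, harg]; positivity)
  refine (h₁.sub (h₂.const_mul _)).congr_deriv ?_
  rw [hlin, harg, sqrt_sq (by positivity), sqrt_sq (by positivity)]
  field_simp
  rw [sq_sqrt hDx.le, sq_sqrt (by nlinarith), sq_sqrt (by linarith)]
  field_simp
  ring

lemma continuousOn_sqrtDivPrimitive (ha : 0 < a) (haD : a ≤ D) :
    ContinuousOn (sqrtDivPrimitive a D) (Icc (-a) a) := by
  rcases haD.lt_or_eq with haD | rfl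
  · refine (by fun_prop : Continuous fun x => arcsin (x / a)).continuousOn.sub
      (continuousOn_const.mul (continuous_arcsin.comp_continuousOn
        (ContinuousOn.div (by fun_prop) (by fun_prop) fun x hx => ?_)))
    have hxa : x ^ 2 ≤ a ^ 2 := sq_le_sq' hx.1 hx.2
    have : 0 < √(D ^ 2 - x ^ 2) := sqrt_pos.2 (by nlinarith)
    positivity
  · unfold sqrtDivPrimitive
    simp only [sub_self, sqrt_zero, zero_div, zero_mul, sub_zero]
    fun_prop

lemma sqrtDivPrimitive_sub (ha : 0 < a) (hD : D ≠ 0) :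
    sqrtDivPrimitive a D a - sqrtDivPrimitive a D (-a) = π * (D - √(D ^ 2 - a ^ 2)) / D := by
  have hend : √(D ^ 2 - a ^ 2) * arcsin (√(D ^ 2 - a ^ 2) * a / (a * √(D ^ 2 - a ^ 2)))
      = √(D ^ 2 - a ^ 2) * (π / 2) := by
    by_cases hc : √(D ^ 2 - a ^ 2) = 0
    · simp [hc]
    · rw [mul_comm a, div_self (by positivity), arcsin_one]
  simp only [sqrtDivPrimitive, neg_sq, mul_neg, neg_div, arcsin_neg, div_self ha.ne', arcsin_one]
  linear_combination (-2 / D) * hend - π * mul_inv_cancel₀ hD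

theorem integral_sqrt_sq_sub_sq_div_sq_sub_sq (ha : 0 < a) (haD : a ≤ D) :
    ∫ x in (-a)..a, √(a ^ 2 - x ^ 2) / (D ^ 2 - x ^ 2) = π * (D - √(D ^ 2 - a ^ 2)) / D := by
  have hderiv := fun x (hx : x ∈ Ioo (-a) a) => hasDerivAt_sqrtDivPrimitive ha haD hx
  have hcont := continuousOn_sqrtDivPrimitive ha haD
  have hnonneg : ∀ x ∈ Ioo (-a) a, 0 ≤ √(a ^ 2 - x ^ 2) / (D ^ 2 - x ^ 2) := fun x hx =>
    div_nonneg (sqrt_nonneg _) (by nlinarith [sq_lt_sq' hx.1 hx.2])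
  rw [intervalIntegral.integral_eq_sub_of_hasDerivAt_of_le (by linarith) hcont hderiv
    ((intervalIntegrable_iff_integrableOn_Ioc_of_le (by linarith)).2
      (intervalIntegral.integrableOn_deriv_of_nonneg hcont hderiv hnonneg)),
    sqrtDivPrimitive_sub ha (by linarith)]

end

theorem kesten_mckay_density (d : ℕ) (hd : 2 ≤ d) :
    ∫ x in (-(2 * Real.sqrt (d - 1)))..(2 * Real.sqrt (d - 1)),
      (d : ℝ) * Real.sqrt (4 * (d - 1) - x ^ 2) / (2 * π * ((d : ℝ) ^ 2 - x ^ 2)) = 1 := by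
  have hd : (2 : ℝ) ≤ d := by exact_mod_cast hd
  set a := 2 * √((d : ℝ) - 1)
  have hsq : √((d : ℝ) - 1) ^ 2 = d - 1 := sq_sqrt (by linarith)
  have ha : 0 < a := mul_pos two_pos (sqrt_pos.2 (by linarith))
  have ha2 : a ^ 2 = 4 * (d - 1) := by rw [mul_pow, hsq]; norm_num
  have haD : a ≤ d := by nlinarith [sq_nonneg (√((d : ℝ) - 1) - 1)]
  have hc : √((d : ℝ) ^ 2 - a ^ 2) = d - 2 := by
    rw [ha2, show (d : ℝ) ^ 2 - 4 * (d - 1) = (d - 2) ^ 2 by ring, sqrt_sq (by linarith)]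
  have hρ : ∀ x : ℝ, (d : ℝ) * √(4 * (d - 1) - x ^ 2) / (2 * π * ((d : ℝ) ^ 2 - x ^ 2))
      = d / (2 * π) * (√(a ^ 2 - x ^ 2) / (d ^ 2 - x ^ 2)) := fun x => by
    rw [ha2, div_mul_div_comm]
  simp_rw [hρ, intervalIntegral.integral_const_mul,
    integral_sqrt_sq_sub_sq_div_sq_sub_sq ha haD, hc]
  field_simp
  ring
end

section
/- For every integer d > 2, ∫_{-2√(d-1)}^{2√(d-1)} |x| · d·√(4(d-1) - x²) / (2π·(d² - x²)) dx = (2d√(d-1))/π - (d(d-2)/π)·arctan(2√(d-1)/(d-2)). -/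
open Real

/-!
With `b = 2√(d-1)` and `c = d - 2` one has `4(d-1) = b²` and `d² = c² + b²`, so the integrand is
`d/(2π) · |x|√(b² - x²)/(c² + b² - x²)`. It is even, and on `[0, b]` the function
`-√(b² - x²) + c·arctan(√(b² - x²)/c)` is an antiderivative of `x√(b² - x²)/(c² + b² - x²)`.
-/

theorem intervalIntegral.integral_neg_self_eq_two_mul_of_even {f : ℝ → ℝ} (hf : Function.Even f)
    {b : ℝ} (hfi : IntervalIntegrable f MeasureTheory.volume 0 b) :
    ∫ x in -b..b, f x = 2 * ∫ x in 0..b, f x := by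
  have hf' : (fun x => f (-x)) = f := funext hf
  have hfi' : IntervalIntegrable f MeasureTheory.volume (-b) 0 := by
    simpa [hf'] using ((IntervalIntegrable.iff_comp_neg (a := 0) (b := b)).mp hfi).symm
  rw [← intervalIntegral.integral_add_adjacent_intervals hfi' hfi, two_mul, ← neg_zero,
    ← intervalIntegral.integral_comp_neg, neg_zero, hf']

theorem hasDerivAt_neg_sqrt_add_mul_arctan_sqrt {b c x : ℝ} (hc : c ≠ 0) (hx : x ^ 2 < b ^ 2) :
    HasDerivAt (fun y => -√(b ^ 2 - y ^ 2) + c * arctan (√(b ^ 2 - y ^ 2) / c))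
      (x * √(b ^ 2 - x ^ 2) / (c ^ 2 + b ^ 2 - x ^ 2)) x := by
  have hu : 0 < b ^ 2 - x ^ 2 := by linarith
  have hs2 : √(b ^ 2 - x ^ 2) ^ 2 = b ^ 2 - x ^ 2 := sq_sqrt hu.le
  have hsqrt : HasDerivAt (fun y => √(b ^ 2 - y ^ 2)) (-(2 * x) / (2 * √(b ^ 2 - x ^ 2))) x :=
    (((hasDerivAt_id x).pow 2).const_sub (b ^ 2)).sqrt hu.ne' |>.congr_deriv (by simp)
  refine (hsqrt.neg.add (((hsqrt.div_const c).arctan).const_mul c)).congr_deriv ?_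
  rw [show c ^ 2 + b ^ 2 - x ^ 2 = c ^ 2 + √(b ^ 2 - x ^ 2) ^ 2 by rw [hs2]; ring]
  field_simp
  ring

theorem continuousOn_div_sq_add_sq_sub_sq {f : ℝ → ℝ} (hf : Continuous f) {b c : ℝ}
    (hc : c ≠ 0) : ContinuousOn (fun x => f x / (c ^ 2 + b ^ 2 - x ^ 2)) (Set.uIcc 0 b) := by
  refine hf.continuousOn.div (by fun_prop) fun x hx => ?_
  have : x ^ 2 ≤ b ^ 2 := by rcases Set.mem_uIcc.mp hx with ⟨h₀, hb⟩ | ⟨hb, h₀⟩ <;> nlinarith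
  have : 0 < c ^ 2 := by positivity
  linarith

theorem integral_mul_sqrt_div_sq_add_sq_sub_sq {b c : ℝ} (hb : 0 ≤ b) (hc : c ≠ 0) :
    ∫ x in 0..b, x * √(b ^ 2 - x ^ 2) / (c ^ 2 + b ^ 2 - x ^ 2) = b - c * arctan (b / c) := by
  rw [intervalIntegral.integral_eq_sub_of_hasDerivAt_of_le hb (by fun_prop)
    (fun x hx => hasDerivAt_neg_sqrt_add_mul_arctan_sqrt hc
      (pow_lt_pow_left₀ hx.2 hx.1.le two_ne_zero))
    (continuousOn_div_sq_add_sq_sub_sq (by fun_prop) hc).intervalIntegrable]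
  simp [sqrt_sq hb, sub_eq_neg_add]

theorem integral_abs_mul_sqrt_div_sq_add_sq_sub_sq {b c : ℝ} (hb : 0 ≤ b) (hc : c ≠ 0) :
    ∫ x in -b..b, |x| * √(b ^ 2 - x ^ 2) / (c ^ 2 + b ^ 2 - x ^ 2) =
      2 * (b - c * arctan (b / c)) := by
  have hcongr : Set.EqOn (fun x => |x| * √(b ^ 2 - x ^ 2) / (c ^ 2 + b ^ 2 - x ^ 2))
      (fun x => x * √(b ^ 2 - x ^ 2) / (c ^ 2 + b ^ 2 - x ^ 2)) (Set.uIcc 0 b) := by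
    intro x hx
    rw [Set.uIcc_of_le hb] at hx
    simp only [abs_of_nonneg hx.1]
  rw [intervalIntegral.integral_neg_self_eq_two_mul_of_even
    (fun x => by simp only [abs_neg, neg_sq])
    (continuousOn_div_sq_add_sq_sub_sq (by fun_prop) hc).intervalIntegrable,
    intervalIntegral.integral_congr hcongr, integral_mul_sqrt_div_sq_add_sq_sub_sq hb hc]

theorem kesten_mckay_abs_moment (d : ℕ) (hd : 2 < d) :
    ∫ x in (-(2 * Real.sqrt (d - 1)))..(2 * Real.sqrt (d - 1)),
      |x| * ((d : ℝ) * Real.sqrt (4 * (d - 1) - x ^ 2) / (2 * π * ((d : ℝ) ^ 2 - x ^ 2))) =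
      2 * d * Real.sqrt (d - 1) / π -
        (d : ℝ) * (d - 2) / π * Real.arctan (2 * Real.sqrt (d - 1) / (d - 2)) := by
  have hd' : (3 : ℝ) ≤ d := by exact_mod_cast hd
  set b := 2 * √((d : ℝ) - 1)
  have hb2 : b ^ 2 = 4 * (d - 1) := by rw [mul_pow, sq_sqrt (by linarith)]; ring
  have hdensity : ∀ x : ℝ, |x| * (d * √(4 * (d - 1) - x ^ 2) / (2 * π * ((d : ℝ) ^ 2 - x ^ 2))) =
      d / (2 * π) * (|x| * √(b ^ 2 - x ^ 2) / ((d - 2) ^ 2 + b ^ 2 - x ^ 2)) := by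
    intro x
    rw [hb2, show ((d : ℝ) - 2) ^ 2 + 4 * (d - 1) - x ^ 2 = d ^ 2 - x ^ 2 by ring]
    field_simp
  simp_rw [hdensity]
  rw [intervalIntegral.integral_const_mul, integral_abs_mul_sqrt_div_sq_add_sq_sub_sq
    (by positivity) (by linarith)]
  field_simp
  ring
end
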